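/- arXiv:2412.20900 — 2 statements merged into one kernel-verified Lean document; each statement's English description precedes it below -/
import Mathlib

section
/- Let X be a real Banach space such that every closed subspace of X is locally complemented in X. Then P(X) = E(X) < ∞, where E(X) = sup over finite-dimensional subspaces Y of X of E_Y(X) = inf{‖T‖ : T : Y* → X* is a continuous linear extension operator}, and P(X) = sup over finite-dimensional subspaces Y of X of P_Y(X) = inf{‖P‖ : P is a continuous linear projection of X onto Y}. -/
open scoped ENNReal
open NormedSpace

universe u

namespace NormedSpace

/-- The topological dual of a seminormed space `E` (the old `NormedSpace.Dual`). -/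
abbrev Dual (𝕜 : Type*) [NontriviallyNormedField 𝕜] (E : Type*) [SeminormedAddCommGroup E]
    [NormedSpace 𝕜 E] : Type _ :=
  E →L[𝕜] 𝕜

end NormedSpace

variable (X : Type u) [NormedAddCommGroup X] [NormedSpace ℝ X]

/-- `Z` is locally `c`-complemented in `X`: for every finite-dimensional subspace `M` of
`X` there is a continuous linear map `f : M → Z` with `‖f‖ ≤ c` fixing `M ∩ Z`. -/
def LocallyComplemented (Z : Submodule ℝ X) (c : ℝ) : Prop :=
  ∀ M : Submodule ℝ X, FiniteDimensional ℝ M →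
    ∃ f : M →L[ℝ] Z, ‖f‖ ≤ c ∧ ∀ x : M, (x : X) ∈ Z → ((f x : Z) : X) = (x : X)

/-- The norms of continuous linear extension operators `Y* → X*`. -/
def extOpNorms (Y : Submodule ℝ X) : Set ℝ≥0∞ :=
  {c | ∃ T : Dual ℝ Y →L[ℝ] Dual ℝ X,
        (∀ (g : Dual ℝ Y) (y : Y), T g y = g y) ∧ c = (‖T‖₊ : ℝ≥0∞)}

/-- The norms of continuous linear projections of `X` onto `Y`. -/
def projNorms (Y : Submodule ℝ X) : Set ℝ≥0∞ :=
  {c | ∃ P : X →L[ℝ] X, P.comp P = P ∧ LinearMap.range (P : X →ₗ[ℝ] X) = Y ∧ c = (‖P‖₊ : ℝ≥0∞)}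

/-- `E(X)`: supremum over finite-dimensional subspaces `Y` of the minimal norm of an
extension operator `Y* → X*`. -/
noncomputable def EconstX : ℝ≥0∞ :=
  ⨆ (Y : Submodule ℝ X) (_ : FiniteDimensional ℝ Y), sInf (extOpNorms X Y)

/-- `P(X)`: supremum over finite-dimensional subspaces `Y` of the minimal norm of a
continuous linear projection of `X` onto `Y`. -/
noncomputable def PconstX : ℝ≥0∞ :=
  ⨆ (Y : Submodule ℝ X) (_ : FiniteDimensional ℝ Y), sInf (projNorms X Y)

/-!
For finite-dimensional `Y`, projections onto `Y` and extension operators `Y* → X*` correspond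
without loss of norm: a projection `P` gives `g ↦ g ∘ P`, and an extension operator `T` gives
`x ↦ J⁻¹ (g ↦ T g x)`, where `J : Y → Y**` is onto. Hence `P(X) = E(X)` for every `X`.

For finiteness, suppose the projection constants of finite-dimensional subspaces are unbounded.
Then for every finite set `Φ` of functionals and every `n` there are finite-dimensional `N ⊆ ker Φ`
and `M` such that every map `M → N` fixing `M ∩ N` has norm `> n`: otherwise an ultrafilter limit
of such maps projects onto `Y ∩ ker Φ` with norm `≤ n`, and adding the remaining `≤ #Φ`
dimensions one at a time multiplies the norm (plus one) by at most `3` each time. Choose the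
`Nₙ` inductively inside the kernels of Mazur's norming functionals for `Wₙ = N₀ + ⋯ + Nₙ₋₁`.
Then the closure `Z` of `⋃ Wₙ` lies in `Wₙ ⊕ ker Φₙ`, with projection onto `Wₙ` of norm `≤ 2`,
and the difference of two consecutive such projections maps `Z` to `Nₙ` with norm `≤ 4` and
fixes `Nₙ`. Composed with a local `c`-complementation of `Z` on `Mₙ`, it gives a map `Mₙ → Nₙ`
of norm `≤ 4c` fixing `Nₙ`, impossible once `n ≥ 4c`.
-/

section

variable {X}

section Retractions

open ContinuousLinearMap

variable {Y : Submodule ℝ X}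

lemma exists_retraction_of_mem_projNorms {c : ℝ≥0∞} (hc : c ∈ projNorms X Y) :
    ∃ r : X →L[ℝ] Y, (∀ y : Y, r y = y) ∧ c = ‖r‖₊ := by
  obtain ⟨P, hPP, rfl, rfl⟩ := hc
  have hmem (x : X) : P x ∈ LinearMap.range (P : X →ₗ[ℝ] X) := LinearMap.mem_range_self _ x
  refine ⟨P.codRestrict _ hmem, ?_, ?_⟩
  · rintro ⟨_, x, rfl⟩
    exact Subtype.ext (congr_arg (fun Q : X →L[ℝ] X => Q x) hPP)
  · exact congr_arg _ (NNReal.eq (P.opNorm_ext (P.codRestrict _ hmem) fun x => rfl))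

lemma sInf_projNorms_le (r : X →L[ℝ] Y) (hr : ∀ y : Y, r y = y) :
    sInf (projNorms X Y) ≤ ‖r‖₊ := by
  refine sInf_le ⟨Y.subtypeL.comp r, ?_, ?_, ?_⟩
  · ext x
    exact congr_arg Subtype.val (hr (r x))
  · refine le_antisymm (fun _ ⟨x, hx⟩ => hx ▸ (r x).2) fun y hy => ⟨y, ?_⟩
    exact congr_arg Subtype.val (hr ⟨y, hy⟩)
  · exact congr_arg _ (NNReal.eq (r.opNorm_ext (Y.subtypeL.comp r) fun x => rfl))

lemma exists_extension_of_retraction (r : X →L[ℝ] Y) (hr : ∀ y : Y, r y = y) :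
    ∃ T : Dual ℝ Y →L[ℝ] Dual ℝ X, (∀ (g : Dual ℝ Y) (y : Y), T g y = g y) ∧ ‖T‖ ≤ ‖r‖ :=
  ⟨(compL ℝ X Y ℝ).flip r, fun g y => congr_arg g (hr y),
    opNorm_le_bound _ (norm_nonneg r) fun g => (g.opNorm_comp_le r).trans_eq (mul_comm _ _)⟩

lemma finrank_strongDual (E : Type*) [NormedAddCommGroup E] [NormedSpace ℝ E]
    [FiniteDimensional ℝ E] : Module.finrank ℝ (StrongDual ℝ E) = Module.finrank ℝ E :=
  LinearMap.toContinuousLinearMap.finrank_eq.symm.trans Subspace.dual_finrank_eq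

lemma surjective_inclusionInDoubleDualLi (E : Type*) [NormedAddCommGroup E] [NormedSpace ℝ E]
    [FiniteDimensional ℝ E] : Function.Surjective (inclusionInDoubleDualLi (E := E) ℝ) :=
  (LinearMap.injective_iff_surjective_of_finrank_eq_finrank (by
    rw [finrank_strongDual, finrank_strongDual])).1 (inclusionInDoubleDualLi (E := E) ℝ).injective

lemma exists_retraction_of_extension [FiniteDimensional ℝ Y] (T : Dual ℝ Y →L[ℝ] Dual ℝ X)
    (hT : ∀ (g : Dual ℝ Y) (y : Y), T g y = g y) :
    ∃ r : X →L[ℝ] Y, (∀ y : Y, r y = y) ∧ ‖r‖ ≤ ‖T‖ := by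
  let e := LinearIsometryEquiv.ofSurjective _ (surjective_inclusionInDoubleDualLi Y)
  refine ⟨e.symm.toLinearIsometry.toContinuousLinearMap.comp T.flip, fun y => e.injective ?_, ?_⟩
  · show e (e.symm (T.flip y)) = e y
    rw [e.apply_symm_apply]
    ext g
    exact hT g y
  · calc ‖e.symm.toLinearIsometry.toContinuousLinearMap.comp T.flip‖ = ‖T.flip‖ :=
          opNorm_ext _ _ fun x => e.symm.norm_map (T.flip x)
      _ ≤ ‖T‖ := (opNorm_flip T).le

lemma sInf_projNorms_eq_sInf_extOpNorms [FiniteDimensional ℝ Y] :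
    sInf (projNorms X Y) = sInf (extOpNorms X Y) := by
  refine le_antisymm (le_sInf ?_) (le_sInf fun c hc => ?_)
  · rintro _ ⟨T, hT, rfl⟩
    obtain ⟨r, hr, hrT⟩ := exists_retraction_of_extension T hT
    exact (sInf_projNorms_le r hr).trans (ENNReal.coe_le_coe.2 hrT)
  · obtain ⟨r, hr, rfl⟩ := exists_retraction_of_mem_projNorms hc
    obtain ⟨T, hT, hTr⟩ := exists_extension_of_retraction r hr
    exact (sInf_le (show (‖T‖₊ : ℝ≥0∞) ∈ extOpNorms X Y from ⟨T, hT, rfl⟩)).trans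
      (ENNReal.coe_le_coe.2 hTr)

variable (X) in
theorem PconstX_eq_EconstX : PconstX X = EconstX X :=
  iSup_congr fun _ => iSup_congr fun _ => sInf_projNorms_eq_sInf_extOpNorms

lemma PconstX_le_ofReal {B : ℝ}
    (hB : ∀ Y : Submodule ℝ X, FiniteDimensional ℝ Y →
      ∃ r : X →L[ℝ] Y, (∀ y : Y, r y = y) ∧ ‖r‖ ≤ B) :
    PconstX X ≤ ENNReal.ofReal B := by
  refine iSup₂_le fun Y hY => ?_
  obtain ⟨r, hr, hrB⟩ := hB Y hY
  refine (sInf_projNorms_le r hr).trans ?_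
  rw [← ENNReal.ofReal_coe_nnreal, coe_nnnorm]
  exact ENNReal.ofReal_le_ofReal hrB

end Retractions

def HasLocalRetraction (N M : Submodule ℝ X) (R : ℝ) : Prop :=
  ∃ f : M →L[ℝ] N, ‖f‖ ≤ R ∧ ∀ x : M, (x : X) ∈ N → (f x : X) = x

section Limits

open Filter Topology

lemma exists_continuousLinearMap_tendsto {ι 𝕜 E F : Type*} [NontriviallyNormedField 𝕜]
    [NormedAddCommGroup E] [NormedSpace 𝕜 E] [NormedAddCommGroup F] [NormedSpace 𝕜 F]
    [ProperSpace F] (l : Ultrafilter ι) (u : ι → E → F) {R : ℝ} (hR : 0 ≤ R)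
    (hadd : ∀ x y, ∀ᶠ i in l, u i (x + y) = u i x + u i y)
    (hsmul : ∀ (c : 𝕜) x, ∀ᶠ i in l, u i (c • x) = c • u i x)
    (hbound : ∀ x, ∀ᶠ i in l, ‖u i x‖ ≤ R * ‖x‖) :
    ∃ g : E →L[𝕜] F, ‖g‖ ≤ R ∧ ∀ x, Tendsto (fun i => u i x) l (𝓝 (g x)) := by
  have hlim (x : E) : ∃ y ∈ Metric.closedBall (0 : F) (R * ‖x‖),
      Tendsto (fun i => u i x) l (𝓝 y) :=
    (isCompact_closedBall 0 _).ultrafilter_le_nhds (l.map _)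
      (le_principal_iff.2 ((hbound x).mono fun i hi => by simpa using hi))
  choose g hgR hg using hlim
  let g₀ : E →ₗ[𝕜] F :=
    { toFun := g
      map_add' := fun x y => tendsto_nhds_unique (hg (x + y))
        (((hg x).add (hg y)).congr' ((hadd x y).mono fun _ hi => hi.symm))
      map_smul' := fun c x => tendsto_nhds_unique (hg (c • x))
        (((hg x).const_smul c).congr' ((hsmul c x).mono fun _ hi => hi.symm)) }
  have hg₀ (x : E) : ‖g₀ x‖ ≤ R * ‖x‖ := mem_closedBall_zero_iff.1 (hgR x)
  exact ⟨g₀.mkContinuous R hg₀, g₀.mkContinuous_norm_le hR hg₀, hg⟩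

lemma exists_retraction_of_forall_finiteDimensional_le (N : Submodule ℝ X)
    [FiniteDimensional ℝ N] {R : ℝ} (hR : 0 ≤ R)
    (hloc : ∀ M : Submodule ℝ X, FiniteDimensional ℝ M → N ≤ M → HasLocalRetraction N M R) :
    ∃ r : X →L[ℝ] N, (∀ y : N, r y = y) ∧ ‖r‖ ≤ R := by
  classical
  let M (s : Finset X) : Submodule ℝ X := N ⊔ Submodule.span ℝ s
  choose f hfR hfN using fun s => hloc (M s) inferInstance le_sup_left
  let u (s : Finset X) (x : X) : N := if hx : x ∈ M s then f s ⟨x, hx⟩ else 0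
  have hu (s : Finset X) (x : X) (hx : x ∈ M s) : u s x = f s ⟨x, hx⟩ := dif_pos hx
  let l := Ultrafilter.of (atTop : Filter (Finset X))
  have hl (x : X) : ∀ᶠ s in l, x ∈ M s := Ultrafilter.of_le _ <|
    (eventually_ge_atTop {x}).mono fun s hs =>
      Submodule.mem_sup_right (Submodule.subset_span (hs (Finset.mem_singleton_self x)))
  obtain ⟨r, hrR, hr⟩ := exists_continuousLinearMap_tendsto l u hR
    (fun x y => ((hl x).and (hl y)).mono fun s ⟨hx, hy⟩ => by
      rw [hu s x hx, hu s y hy, hu s _ (add_mem hx hy), ← map_add]; rfl)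
    (fun c x => (hl x).mono fun s hx => by
      rw [hu s x hx, hu s _ (Submodule.smul_mem _ c hx), ← map_smul]; rfl)
    (fun x => (hl x).mono fun s hx => by
      rw [hu s x hx]
      exact ((f s).le_opNorm _).trans (mul_le_mul_of_nonneg_right (hfR s) (norm_nonneg x)))
  refine ⟨r, fun y => tendsto_nhds_unique (hr y) (tendsto_const_nhds.congr fun s => ?_), hrR⟩
  rw [hu s y (le_sup_left (a := N) y.2)]
  exact (Subtype.ext (hfN s _ y.2)).symm

end Limits

section Extension

open ContinuousLinearMap

lemma exists_dual_eq_one_of_notMem {S : Submodule ℝ X} (hS : IsClosed (S : Set X)) {u : X}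
    (hu : u ∉ S) :
    ∃ (v : X) (φ : Dual ℝ X), v - u ∈ S ∧ (∀ y ∈ S, φ y = 0) ∧ φ v = 1 ∧ ‖φ‖ * ‖v‖ ≤ 2 := by
  have hd : 0 < ‖S.mkQ u‖ := norm_pos_iff.2 (by simpa [Submodule.Quotient.mk_eq_zero] using hu)
  obtain ⟨v, hvu, hv⟩ := Submodule.Quotient.norm_mk_lt (S.mkQ u) hd
  obtain ⟨g, hg, hgu⟩ := exists_dual_vector ℝ (S.mkQ u) hd.ne'
  let φ : Dual ℝ X := ‖S.mkQ u‖⁻¹ • g.comp S.mkQL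
  have hφ : ‖φ‖ ≤ ‖S.mkQ u‖⁻¹ := by
    refine opNorm_le_bound _ (by positivity) fun x => ?_
    calc ‖φ x‖ = ‖S.mkQ u‖⁻¹ * ‖g (S.mkQ x)‖ := by simp [φ]
      _ ≤ ‖S.mkQ u‖⁻¹ * ‖x‖ := by
        gcongr
        exact (g.le_opNorm _).trans (by rw [hg, one_mul]; exact Submodule.Quotient.norm_mk_le S x)
  refine ⟨v, φ, (Submodule.Quotient.eq S).1 hvu, fun y hy => ?_, ?_, ?_⟩
  · simp [φ, (Submodule.Quotient.mk_eq_zero S).2 hy]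
  · change ‖S.mkQ u‖⁻¹ * g (Submodule.Quotient.mk v) = 1
    rw [hvu, hgu]
    exact inv_mul_cancel₀ hd.ne'
  · calc ‖φ‖ * ‖v‖ ≤ ‖S.mkQ u‖⁻¹ * (2 * ‖S.mkQ u‖) := by gcongr; linarith
      _ = 2 := by field_simp

lemma exists_retraction_sup_span_singleton {S : Submodule ℝ X} (r : X →L[ℝ] S)
    (hr : ∀ y : S, r y = y) {v : X} {φ : Dual ℝ X} {C : ℝ} (hφS : ∀ y ∈ S, φ y = 0)
    (hφv : φ v = 1) (hφ : ‖φ‖ * ‖v‖ ≤ C) :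
    ∃ r' : X →L[ℝ] ↥(S ⊔ Submodule.span ℝ {v}),
      (∀ y : ↥(S ⊔ Submodule.span ℝ {v}), r' y = y) ∧ ‖r'‖ + 1 ≤ (C + 1) * (‖r‖ + 1) := by
  let P : X →L[ℝ] X :=
    S.subtypeL.comp (r.comp (ContinuousLinearMap.id ℝ X - φ.smulRight v)) + φ.smulRight v
  have hP (x : X) : P x = r (x - φ x • v) + φ x • v := rfl
  have hmem (x : X) : P x ∈ S ⊔ Submodule.span ℝ {v} :=
    add_mem (Submodule.mem_sup_left (r _).2)
      (Submodule.mem_sup_right (Submodule.smul_mem _ _ (Submodule.mem_span_singleton_self v)))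
  refine ⟨P.codRestrict _ hmem, fun ⟨y, hy⟩ => Subtype.ext ?_, ?_⟩
  · obtain ⟨s, hs, w, hw, rfl⟩ := Submodule.mem_sup.1 hy
    obtain ⟨t, rfl⟩ := Submodule.mem_span_singleton.1 hw
    have hφst : φ (s + t • v) = t := by simp [hφS s hs, hφv]
    change P (s + t • v) = s + t • v
    rw [hP, hφst, add_sub_cancel_right, hr ⟨s, hs⟩]
  · have hC : 0 ≤ C := (by positivity : 0 ≤ ‖φ‖ * ‖v‖).trans hφ
    have hπ (x : X) : ‖φ x • v‖ ≤ C * ‖x‖ :=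
      calc ‖φ x • v‖ ≤ ‖φ‖ * ‖x‖ * ‖v‖ := by rw [norm_smul]; gcongr; exact φ.le_opNorm x
        _ = ‖φ‖ * ‖v‖ * ‖x‖ := by ring
        _ ≤ C * ‖x‖ := by gcongr
    have hbound : ‖P.codRestrict _ hmem‖ ≤ ‖r‖ * (1 + C) + C :=
      opNorm_le_bound _ (by positivity) fun x =>
        calc ‖P x‖ ≤ ‖r (x - φ x • v)‖ + ‖φ x • v‖ := norm_add_le _ _
          _ ≤ ‖r‖ * (‖x‖ + C * ‖x‖) + C * ‖x‖ := by
            gcongr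
            · refine (r.le_opNorm _).trans ?_
              gcongr
              exact (norm_sub_le _ _).trans (by gcongr; exact hπ x)
            · exact hπ x
          _ = (‖r‖ * (1 + C) + C) * ‖x‖ := by ring
    linarith [mul_nonneg hC (norm_nonneg r)]

lemma exists_retraction_of_le_of_finrank_le (k : ℕ) {S Y : Submodule ℝ X}
    [FiniteDimensional ℝ Y] (hSY : S ≤ Y)
    (hk : Module.finrank ℝ Y ≤ Module.finrank ℝ S + k) (r : X →L[ℝ] S) (hr : ∀ y : S, r y = y) :
    ∃ r' : X →L[ℝ] Y, (∀ y : Y, r' y = y) ∧ ‖r'‖ + 1 ≤ 3 ^ k * (‖r‖ + 1) := by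
  induction k generalizing S with
  | zero =>
    obtain rfl : S = Y := Submodule.eq_of_le_of_finrank_le hSY (by simpa using hk)
    exact ⟨r, hr, by simp⟩
  | succ k ih =>
    by_cases hSY' : S = Y
    · subst hSY'
      exact ⟨r, hr, le_mul_of_one_le_left (by positivity) (one_le_pow₀ (by norm_num))⟩
    obtain ⟨u, huY, huS⟩ := SetLike.exists_of_lt (lt_of_le_of_ne hSY hSY')
    have : FiniteDimensional ℝ S := Submodule.finiteDimensional_of_le hSY
    obtain ⟨v, φ, hvu, hφS, hφv, hφ⟩ :=
      exists_dual_eq_one_of_notMem S.closed_of_finiteDimensional huS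
    have hvY : v ∈ Y := by simpa using add_mem (hSY hvu) huY
    have hvS : v ∉ S := fun h => huS (by simpa using sub_mem h hvu)
    obtain ⟨r₁, hr₁, hr₁r⟩ := exists_retraction_sup_span_singleton r hr hφS hφv hφ
    have hS₁Y : S ⊔ Submodule.span ℝ {v} ≤ Y :=
      sup_le hSY (Submodule.span_le.2 (Set.singleton_subset_iff.2 hvY))
    have : FiniteDimensional ℝ ↥(S ⊔ Submodule.span ℝ {v}) := Submodule.finiteDimensional_of_le hS₁Y
    have hlt : Module.finrank ℝ S < Module.finrank ℝ ↥(S ⊔ Submodule.span ℝ {v}) :=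
      Submodule.finrank_lt_finrank_of_lt <| lt_of_le_of_ne le_sup_left fun h =>
        hvS (h ▸ Submodule.mem_sup_right (Submodule.mem_span_singleton_self v))
    obtain ⟨r', hr', hr'r₁⟩ := ih hS₁Y (by omega) r₁ hr₁
    refine ⟨r', hr', hr'r₁.trans ?_⟩
    calc 3 ^ k * (‖r₁‖ + 1) ≤ 3 ^ k * ((2 + 1) * (‖r‖ + 1)) := by gcongr
      _ = 3 ^ (k + 1) * (‖r‖ + 1) := by ring

end Extension

noncomputable def commonKer (Φ : Finset (Dual ℝ X)) : Submodule ℝ X :=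
  LinearMap.ker (ContinuousLinearMap.pi fun φ : Φ => (φ : Dual ℝ X) : X →ₗ[ℝ] Φ → ℝ)

lemma mem_commonKer {Φ : Finset (Dual ℝ X)} {x : X} : x ∈ commonKer Φ ↔ ∀ φ ∈ Φ, φ x = 0 := by
  simp [commonKer, funext_iff]

lemma isClosed_commonKer (Φ : Finset (Dual ℝ X)) : IsClosed (commonKer Φ : Set X) :=
  ContinuousLinearMap.isClosed_ker _

lemma commonKer_anti {Φ Ψ : Finset (Dual ℝ X)} (h : Φ ⊆ Ψ) : commonKer Ψ ≤ commonKer Φ :=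
  fun _ hx => mem_commonKer.2 fun φ hφ => mem_commonKer.1 hx φ (h hφ)

lemma finrank_le_finrank_inf_commonKer_add_card (Y : Submodule ℝ X) [FiniteDimensional ℝ Y]
    (Φ : Finset (Dual ℝ X)) :
    Module.finrank ℝ Y ≤ Module.finrank ℝ ↥(Y ⊓ commonKer Φ) + Φ.card := by
  let L := (ContinuousLinearMap.pi fun φ : Φ => (φ : Dual ℝ X) : X →ₗ[ℝ] Φ → ℝ).domRestrict Y
  have hker : Module.finrank ℝ (LinearMap.ker L) = Module.finrank ℝ ↥(Y ⊓ commonKer Φ) := by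
    have : LinearMap.ker L = Submodule.comap Y.subtype (Y ⊓ commonKer Φ) := by
      rw [LinearMap.ker_domRestrict, Submodule.comap_inf, Submodule.comap_subtype_self, top_inf_eq]
      rfl
    rw [this]
    exact (Submodule.comapSubtypeEquivOfLe inf_le_left).finrank_eq
  have hrange : Module.finrank ℝ (LinearMap.range L) ≤ Φ.card := by
    simpa using Submodule.finrank_le (LinearMap.range L)
  have := LinearMap.finrank_range_add_finrank_ker L
  omega

lemma exists_retraction_of_forall_le_commonKer (Φ : Finset (Dual ℝ X)) {R : ℝ} (hR : 0 ≤ R)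
    (hloc : ∀ N M : Submodule ℝ X, FiniteDimensional ℝ N → FiniteDimensional ℝ M →
      N ≤ commonKer Φ → N ≤ M → HasLocalRetraction N M R)
    (Y : Submodule ℝ X) [FiniteDimensional ℝ Y] :
    ∃ r : X →L[ℝ] Y, (∀ y : Y, r y = y) ∧ ‖r‖ + 1 ≤ 3 ^ Φ.card * (R + 1) := by
  have : FiniteDimensional ℝ ↥(Y ⊓ commonKer Φ) := Submodule.finiteDimensional_of_le inf_le_left
  obtain ⟨r₀, hr₀, hr₀R⟩ := exists_retraction_of_forall_finiteDimensional_le (Y ⊓ commonKer Φ) hR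
    fun M hM hle => hloc _ M inferInstance hM inf_le_right hle
  obtain ⟨r, hr, hrr₀⟩ := exists_retraction_of_le_of_finrank_le Φ.card inf_le_left
    (finrank_le_finrank_inf_commonKer_add_card Y Φ) r₀ hr₀
  exact ⟨r, hr, hrr₀.trans (by gcongr)⟩

/-- The projection of `W + H` onto `W` along `H` is well defined and has norm at most `C`. -/
def IsBoundedSplitting (C : ℝ) (W H : Submodule ℝ X) : Prop :=
  ∀ w ∈ W, ∀ h ∈ H, ‖w‖ ≤ C * ‖w + h‖

namespace IsBoundedSplitting

variable {C : ℝ} {W H : Submodule ℝ X}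

lemma mono_right {H' : Submodule ℝ X} (hs : IsBoundedSplitting C W H) (hH' : H' ≤ H) :
    IsBoundedSplitting C W H' :=
  fun w hw h hh => hs w hw h (hH' hh)

lemma eq_of_sub_mem (hs : IsBoundedSplitting C W H) {x w w' : X} (hw : w ∈ W) (hw' : w' ∈ W)
    (hxw : x - w ∈ H) (hxw' : x - w' ∈ H) : w = w' := by
  have := hs (w - w') (sub_mem hw hw') _ (sub_mem hxw hxw')
  rw [show w - w' + (x - w - (x - w')) = 0 by abel, norm_zero, mul_zero] at this
  exact sub_eq_zero.1 (norm_le_zero_iff.1 this)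

lemma exists_continuousLinearMap (hs : IsBoundedSplitting C W H) (hC : 0 ≤ C)
    {V : Submodule ℝ X} (hV : V ≤ W ⊔ H) :
    ∃ p : V →L[ℝ] X, (∀ v : V, p v ∈ W ∧ (v : X) - p v ∈ H) ∧ ‖p‖ ≤ C := by
  have hdec (v : V) : ∃ w ∈ W, (v : X) - w ∈ H := by
    obtain ⟨w, hw, h, hh, hwh⟩ := Submodule.mem_sup.1 (hV v.2)
    exact ⟨w, hw, by rwa [← hwh, add_sub_cancel_left]⟩
  choose p hpW hpH using hdec
  let p₀ : V →ₗ[ℝ] X :=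
    { toFun := p
      map_add' := fun a b => hs.eq_of_sub_mem (hpW (a + b)) (add_mem (hpW a) (hpW b)) (hpH _)
        (by simpa [add_sub_add_comm] using add_mem (hpH a) (hpH b))
      map_smul' := fun c a => hs.eq_of_sub_mem (hpW (c • a)) (W.smul_mem c (hpW a)) (hpH _)
        (by simpa [smul_sub] using H.smul_mem c (hpH a)) }
  have hp₀ (v : V) : ‖p₀ v‖ ≤ C * ‖v‖ := by
    have := hs (p v) (hpW v) _ (hpH v)
    rwa [add_sub_cancel] at this
  exact ⟨p₀.mkContinuous C hp₀, fun v => ⟨hpW v, hpH v⟩, p₀.mkContinuous_norm_le hC hp₀⟩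

/-- The difference of the projections along the two splittings is the retraction. -/
lemma exists_retraction {C' : ℝ} (hs : IsBoundedSplitting C W H) (hC : 0 ≤ C) {N H' : Submodule ℝ X}
    (hs' : IsBoundedSplitting C' (W ⊔ N) H') (hC' : 0 ≤ C') (hNH : N ≤ H) (hH' : H' ≤ H)
    {V : Submodule ℝ X} (hV : V ≤ W ⊔ N ⊔ H') :
    ∃ q : V →L[ℝ] N, ‖q‖ ≤ C + C' ∧ ∀ v : V, (v : X) ∈ N → (q v : X) = v := by
  have hVWH : V ≤ W ⊔ H :=
    hV.trans (sup_le (sup_le le_sup_left (hNH.trans le_sup_right)) (hH'.trans le_sup_right))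
  obtain ⟨p, hp, hpC⟩ := hs.exists_continuousLinearMap hC hVWH
  obtain ⟨p', hp', hp'C⟩ := hs'.exists_continuousLinearMap hC' hV
  have hmem (v : V) : (p' - p) v ∈ N := by
    obtain ⟨w, hw, x, hx, hwx⟩ := Submodule.mem_sup.1 (hp' v).1
    have hpv : p v = w := by
      refine hs.eq_of_sub_mem (hp v).1 hw (hp v).2 ?_
      rw [show (v : X) - w = x + ((v : X) - p' v) by rw [← hwx]; abel]
      exact add_mem (hNH hx) (hH' (hp' v).2)
    simpa [hpv, ← hwx] using hx
  refine ⟨(p' - p).codRestrict N hmem, ?_, fun v hv => ?_⟩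
  · refine ContinuousLinearMap.opNorm_le_bound _ (add_nonneg hC hC') fun v => ?_
    calc ‖p' v - p v‖ ≤ ‖p' v‖ + ‖p v‖ := norm_sub_le _ _
      _ ≤ C' * ‖v‖ + C * ‖v‖ := by
        gcongr
        · exact (p'.le_opNorm v).trans (by gcongr)
        · exact (p.le_opNorm v).trans (by gcongr)
      _ = (C + C') * ‖v‖ := by ring
  · have hp'v : p' v = v :=
      hs'.eq_of_sub_mem (hp' v).1 (Submodule.mem_sup_right hv) (hp' v).2 (by simp)
    have hpv : p v = 0 := hs.eq_of_sub_mem (hp v).1 W.zero_mem (hp v).2 (by simpa using hNH hv)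
    change p' v - p v = v
    rw [hp'v, hpv, sub_zero]

end IsBoundedSplitting

/-- Mazur's lemma: take functionals norming a finite `(1 - C⁻¹)`-net of the unit sphere of `W`. -/
lemma exists_isBoundedSplitting_commonKer {C : ℝ} (hC : 1 < C) (W : Submodule ℝ X)
    [FiniteDimensional ℝ W] : ∃ Φ : Finset (Dual ℝ X), IsBoundedSplitting C W (commonKer Φ) := by
  classical
  have hδ : 0 < 1 - C⁻¹ := sub_pos.2 (inv_lt_one_of_one_lt₀ hC)
  obtain ⟨t, htS, htfin, hcover⟩ := finite_cover_balls_of_compact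
    ((isCompact_sphere (0 : W) 1).image continuous_subtype_val) hδ
  choose ψ hψ1 hψ using exists_dual_vector'' ℝ (E := X)
  refine ⟨htfin.toFinset.image ψ, fun w hw h hh => ?_⟩
  rcases eq_or_ne w 0 with rfl | hw0
  · simpa using mul_nonneg (by linarith : (0 : ℝ) ≤ C) (norm_nonneg h)
  have hwpos : 0 < ‖w‖ := norm_pos_iff.2 hw0
  obtain ⟨z, hzt, hz⟩ := Set.mem_iUnion₂.1 <| hcover
    ⟨⟨‖w‖⁻¹ • w, W.smul_mem _ hw⟩, by simp [norm_smul, hwpos.ne'], rfl⟩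
  have hz1 : ‖z‖ = 1 := by
    obtain ⟨y, hy, rfl⟩ := htS hzt
    simpa using hy
  have hψh : ψ z h = 0 :=
    mem_commonKer.1 hh _ (Finset.mem_image_of_mem ψ (htfin.mem_toFinset.2 hzt))
  have hψw : ψ z (w + h) = ‖w‖ * (1 - ψ z (z - ‖w‖⁻¹ • w)) := by
    rw [map_add, hψh, map_sub, hψ z, hz1, map_smul, smul_eq_mul, RCLike.ofReal_one]
    field_simp
    ring
  have hnear : ψ z (z - ‖w‖⁻¹ • w) ≤ 1 - C⁻¹ := by
    refine (le_abs_self _).trans (((ψ z).le_opNorm _).trans ?_)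
    rw [Metric.mem_ball, dist_eq_norm, ← norm_neg, neg_sub] at hz
    nlinarith [hψ1 z, norm_nonneg (ψ z), norm_nonneg (z - ‖w‖⁻¹ • w)]
  have hψle : ψ z (w + h) ≤ ‖w + h‖ := (le_abs_self _).trans (((ψ z).le_opNorm _).trans
    (mul_le_of_le_one_left (norm_nonneg _) (hψ1 z)))
  have : ‖w‖ * C⁻¹ ≤ ‖w + h‖ := by nlinarith
  rw [← div_eq_mul_inv, div_le_iff₀ (by linarith)] at this
  linarith [mul_comm C ‖w + h‖]

section Construction

open scoped Classical

variable (N : Finset (Dual ℝ X) → ℕ → Submodule ℝ X) (Ψ : Submodule ℝ X → Finset (Dual ℝ X))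

noncomputable def mazurStage : ℕ → Finset (Dual ℝ X) × Submodule ℝ X
  | 0 => (∅, ⊥)
  | n + 1 =>
    let W := (mazurStage n).2 ⊔ N (mazurStage n).1 n
    ((mazurStage n).1 ∪ Ψ W, W)

lemma mazurStage_succ_snd (n : ℕ) :
    (mazurStage N Ψ (n + 1)).2 = (mazurStage N Ψ n).2 ⊔ N (mazurStage N Ψ n).1 n :=
  rfl

lemma mazurStage_succ_fst (n : ℕ) :
    (mazurStage N Ψ (n + 1)).1 = (mazurStage N Ψ n).1 ∪ Ψ (mazurStage N Ψ (n + 1)).2 :=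
  rfl

lemma subset_mazurStage_succ_fst (n : ℕ) :
    Ψ (mazurStage N Ψ (n + 1)).2 ⊆ (mazurStage N Ψ (n + 1)).1 :=
  (mazurStage_succ_fst N Ψ n).symm ▸ Finset.subset_union_right

lemma monotone_mazurStage_fst : Monotone fun n => (mazurStage N Ψ n).1 :=
  monotone_nat_of_le_succ fun n => (mazurStage_succ_fst N Ψ n).symm ▸ Finset.subset_union_left

lemma monotone_mazurStage_snd : Monotone fun n => (mazurStage N Ψ n).2 :=
  monotone_nat_of_le_succ fun n => le_sup_left.trans_eq (mazurStage_succ_snd N Ψ n).symm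

variable {N Ψ}

lemma finiteDimensional_mazurStage_snd (hN : ∀ Φ n, FiniteDimensional ℝ (N Φ n)) (n : ℕ) :
    FiniteDimensional ℝ (mazurStage N Ψ n).2 := by
  induction n with
  | zero => exact inferInstanceAs (FiniteDimensional ℝ (⊥ : Submodule ℝ X))
  | succ n ih =>
    have := hN (mazurStage N Ψ n).1 n
    exact Submodule.finiteDimensional_sup _ _

lemma isBoundedSplitting_mazurStage (hN : ∀ Φ n, FiniteDimensional ℝ (N Φ n))
    (hΨ : ∀ W : Submodule ℝ X, FiniteDimensional ℝ W → IsBoundedSplitting 2 W (commonKer (Ψ W)))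
    (n : ℕ) : IsBoundedSplitting 2 (mazurStage N Ψ n).2 (commonKer (mazurStage N Ψ n).1) := by
  cases n with
  | zero =>
    intro w hw h _
    obtain rfl : w = 0 := (Submodule.mem_bot ℝ).1 hw
    simp
  | succ n =>
    exact (hΨ _ (finiteDimensional_mazurStage_snd hN _)).mono_right
      (commonKer_anti (subset_mazurStage_succ_fst N Ψ n))

lemma le_commonKer_mazurStage (hNΦ : ∀ Φ n, N Φ n ≤ commonKer Φ) {l i : ℕ} (hli : l ≤ i) :
    N (mazurStage N Ψ i).1 i ≤ commonKer (mazurStage N Ψ l).1 :=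
  (hNΦ _ i).trans (commonKer_anti (monotone_mazurStage_fst N Ψ hli))

lemma mazurStage_snd_le_sup (hNΦ : ∀ Φ n, N Φ n ≤ commonKer Φ) (m l : ℕ) :
    (mazurStage N Ψ m).2 ≤ (mazurStage N Ψ l).2 ⊔ commonKer (mazurStage N Ψ l).1 := by
  induction m with
  | zero => exact bot_le
  | succ m ih =>
    refine (mazurStage_succ_snd N Ψ m).trans_le (sup_le ih ?_)
    rcases le_or_gt l m with hlm | hml
    · exact (le_commonKer_mazurStage hNΦ hlm).trans le_sup_right
    · exact (le_sup_right.trans_eq (mazurStage_succ_snd N Ψ m).symm).trans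
        ((monotone_mazurStage_snd N Ψ hml).trans le_sup_left)

lemma topologicalClosure_iSup_mazurStage_le (hN : ∀ Φ n, FiniteDimensional ℝ (N Φ n))
    (hNΦ : ∀ Φ n, N Φ n ≤ commonKer Φ) (l : ℕ) :
    (⨆ m, (mazurStage N Ψ m).2).topologicalClosure ≤
      (mazurStage N Ψ l).2 ⊔ commonKer (mazurStage N Ψ l).1 := by
  have := finiteDimensional_mazurStage_snd (Ψ := Ψ) hN l
  refine Submodule.topologicalClosure_minimal _ (iSup_le fun m => mazurStage_snd_le_sup hNΦ m l) ?_
  rw [sup_comm]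
  exact Submodule.isClosed_sup_finiteDimensional _ _ (isClosed_commonKer _)

end Construction

lemma not_locallyComplemented_topologicalClosure_iSup_mazurStage
    {N M : Finset (Dual ℝ X) → ℕ → Submodule ℝ X} {Ψ : Submodule ℝ X → Finset (Dual ℝ X)}
    (hN : ∀ Φ n, FiniteDimensional ℝ (N Φ n)) (hM : ∀ Φ n, FiniteDimensional ℝ (M Φ n))
    (hNΦ : ∀ Φ n, N Φ n ≤ commonKer Φ) (hNM : ∀ Φ n, ¬ HasLocalRetraction (N Φ n) (M Φ n) n)
    (hΨ : ∀ W : Submodule ℝ X, FiniteDimensional ℝ W → IsBoundedSplitting 2 W (commonKer (Ψ W)))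
    (c : ℝ) : ¬ LocallyComplemented X (⨆ m, (mazurStage N Ψ m).2).topologicalClosure c := by
  intro hc
  set n := ⌈4 * c⌉₊
  obtain ⟨q, hq, hqN⟩ := (isBoundedSplitting_mazurStage hN hΨ n).exists_retraction zero_le_two
    (isBoundedSplitting_mazurStage hN hΨ (n + 1)) zero_le_two (le_commonKer_mazurStage hNΦ le_rfl)
    (commonKer_anti (monotone_mazurStage_fst N Ψ n.le_succ))
    (topologicalClosure_iSup_mazurStage_le hN hNΦ (n + 1))
  obtain ⟨f, hf, hfN⟩ := hc (M _ n) (hM _ _)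
  refine hNM (mazurStage N Ψ n).1 n ⟨q.comp f, ?_, fun x hx => ?_⟩
  · calc ‖q.comp f‖ ≤ ‖q‖ * ‖f‖ := q.opNorm_comp_le f
      _ ≤ (2 + 2) * c := mul_le_mul hq hf (norm_nonneg f) (by norm_num)
      _ ≤ n := by linarith [Nat.le_ceil (4 * c)]
  · have hxZ : (x : X) ∈ (⨆ m, (mazurStage N Ψ m).2).topologicalClosure :=
      Submodule.le_topologicalClosure _ <|
        Submodule.mem_iSup_of_mem (n + 1) (Submodule.mem_sup_right hx)
    have hfx : (f x : X) = x := hfN x hxZ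
    rw [ContinuousLinearMap.comp_apply, hqN (f x) (hfx ▸ hx), hfx]

theorem exists_retraction_norm_le_of_locallyComplemented
    (h : ∀ Z : Submodule ℝ X, IsClosed (Z : Set X) → ∃ c : ℝ, LocallyComplemented X Z c) :
    ∃ B : ℝ, ∀ Y : Submodule ℝ X, FiniteDimensional ℝ Y →
      ∃ r : X →L[ℝ] Y, (∀ y : Y, r y = y) ∧ ‖r‖ ≤ B := by
  by_contra! hcon
  have hbad (Φ : Finset (Dual ℝ X)) (n : ℕ) : ∃ N M : Submodule ℝ X, FiniteDimensional ℝ N ∧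
      FiniteDimensional ℝ M ∧ N ≤ commonKer Φ ∧ ¬ HasLocalRetraction N M n := by
    by_contra! hc
    obtain ⟨Y, hY, hYr⟩ := hcon (3 ^ Φ.card * (n + 1))
    obtain ⟨r, hr, hrn⟩ := exists_retraction_of_forall_le_commonKer Φ n.cast_nonneg
      (fun N M hN hM hNΦ _ => hc N M hN hM hNΦ) Y
    linarith [hYr r hr, norm_nonneg r]
  choose N M hN hM hNΦ hNM using hbad
  have hΨ (W : Submodule ℝ X) :
      ∃ Φ : Finset (Dual ℝ X), FiniteDimensional ℝ W → IsBoundedSplitting 2 W (commonKer Φ) := by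
    by_cases hW : FiniteDimensional ℝ W
    · exact (exists_isBoundedSplitting_commonKer one_lt_two W).imp fun _ h _ => h
    · exact ⟨∅, fun h => absurd h hW⟩
  choose Ψ hΨ using hΨ
  obtain ⟨c, hc⟩ := h _ (Submodule.isClosed_topologicalClosure (⨆ m, (mazurStage N Ψ m).2))
  exact not_locallyComplemented_topologicalClosure_iSup_mazurStage hN hM hNΦ hNM hΨ c hc

end

theorem projection_constant_eq_extension_constant
    (h : ∀ Z : Submodule ℝ X, IsClosed (Z : Set X) →
      ∃ c : ℝ, 0 < c ∧ LocallyComplemented X Z c) :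
    PconstX X = EconstX X ∧ EconstX X < ∞ := by
  obtain ⟨B, hB⟩ := exists_retraction_norm_le_of_locallyComplemented fun Z hZ =>
    (h Z hZ).imp fun _ hc => hc.2
  refine ⟨PconstX_eq_EconstX X, ?_⟩
  rw [← PconstX_eq_EconstX X]
  exact (PconstX_le_ofReal hB).trans_lt ENNReal.ofReal_lt_top
end

section
/- Let X be a real Banach space and Z a closed subspace of X such that (a) Z is a c-Lipschitz retract of X, i.e., there exists a map r : X → X that is Lipschitz with constant c, satisfies r(x) ∈ Z for all x ∈ X and r(z) = z for all z ∈ Z, and (b) Z is complemented in its bidual, i.e., there exists a continuous linear map P : Z** → Z with P(ι_Z(z)) = z for all z ∈ Z, where ι_Z : Z → Z** is the canonical embedding. Then Z is complemented in X by a continuous linear projection. -/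
/-!
Lindenstrauss's averaging argument. Abelian groups are amenable: Hahn–Banach applied to the
sublinear functional `f ↦ inf_a sup_y 𝔼 i, f (y + a i)` (over finite families `a`) yields
translation-invariant means `m_Z` on `Z` and `m_X` on `X`. Averaging the retraction over the
translations by `Z`, `⟨w x, φ⟩ = m_Z (y ↦ φ (r (x + y) - y))`, gives a Lipschitz map `w : X → Z**`
with `w (x + z) = w x + ι z`; averaging its increments, `⟨T x, φ⟩ = m_X (y ↦ ⟨w (x + y) - w y, φ⟩)`,
gives an additive Lipschitz, hence continuous linear, map `T : X → Z**` extending `ι`.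
Then `P ∘ T` is a continuous linear projection of `X` onto `Z`.
-/

open scoped NNReal BigOperators Pointwise
open NormedSpace Filter

universe u

section UpperMean

variable {G : Type*} [AddCommGroup G] {f g : G → ℝ} {B C D M N : ℝ}

def translateAverageBounds (f : G → ℝ) : Set ℝ :=
  {M | ∃ (ι : Type) (_ : Fintype ι) (_ : Nonempty ι) (a : ι → G), ∀ y, 𝔼 i, f (y + a i) ≤ M}

/-- `upperMean f = inf_a sup_y 𝔼 i, f (y + a i)`, written through upper bounds instead of `sSup`. -/
noncomputable def upperMean (f : G → ℝ) : ℝ := sInf (translateAverageBounds f)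

lemma mem_translateAverageBounds_of_forall_le (h : ∀ y, f y ≤ C) :
    C ∈ translateAverageBounds f :=
  ⟨Unit, inferInstance, inferInstance, 0, fun y => by simpa using h y⟩

lemma le_of_mem_translateAverageBounds (h : ∀ y, B ≤ f y) (hM : M ∈ translateAverageBounds f) :
    B ≤ M := by
  obtain ⟨ι, _, _, a, ha⟩ := hM
  exact (Finset.le_expect Finset.univ_nonempty fun i _ => h _).trans (ha 0)

lemma add_mem_translateAverageBounds (hM : M ∈ translateAverageBounds f)
    (hN : N ∈ translateAverageBounds g) : M + N ∈ translateAverageBounds (f + g) := by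
  obtain ⟨ι, _, _, a, ha⟩ := hM
  obtain ⟨κ, _, _, b, hb⟩ := hN
  refine ⟨ι × κ, inferInstance, inferInstance, fun p => a p.1 + b p.2, fun y => ?_⟩
  have hf : 𝔼 p : ι × κ, f (y + (a p.1 + b p.2)) ≤ M := by
    rw [← Finset.univ_product_univ, Finset.expect_product, Finset.expect_comm]
    exact Finset.expect_le Finset.univ_nonempty fun j _ => by
      simpa only [add_assoc, add_comm (b j)] using ha (y + b j)
  have hg : 𝔼 p : ι × κ, g (y + (a p.1 + b p.2)) ≤ N := by
    rw [← Finset.univ_product_univ, Finset.expect_product]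
    exact Finset.expect_le Finset.univ_nonempty fun i _ => by
      simpa only [add_assoc] using hb (y + a i)
  simpa only [Pi.add_apply, Finset.expect_add_distrib] using add_le_add hf hg

lemma translateAverageBounds_smul {t : ℝ} (ht : 0 < t) :
    translateAverageBounds (t • f) = t • translateAverageBounds f := by
  ext M
  simp only [Set.mem_smul_set_iff_inv_smul_mem₀ ht.ne', translateAverageBounds, Set.mem_ofPred_eq,
    Pi.smul_apply, smul_eq_mul, ← Finset.mul_expect, ← le_div_iff₀' ht, div_eq_inv_mul]

lemma div_mem_translateAverageBounds_sub_comp_add (hf : ∀ y, |f y| ≤ C) (a : G) (n : ℕ) :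
    2 * C / (n + 1 : ℕ) ∈ translateAverageBounds fun y => f (y + a) - f y := by
  refine ⟨Fin (n + 1), inferInstance, inferInstance, fun i => (i : ℕ) • a, fun y => ?_⟩
  rw [Fintype.expect_eq_sum_div_card, Fintype.card_fin]
  gcongr
  have htelescope : ∑ i : Fin (n + 1), (f (y + (i : ℕ) • a + a) - f (y + (i : ℕ) • a)) =
      f (y + (n + 1) • a) - f (y + 0 • a) := by
    rw [Fin.sum_univ_eq_sum_range (fun i => f (y + i • a + a) - f (y + i • a)),
      ← Finset.sum_range_sub (fun i => f (y + i • a))]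
    simp only [succ_nsmul, add_assoc]
  rw [htelescope]
  linarith [(abs_le.1 (hf (y + (n + 1) • a))).2, (abs_le.1 (hf (y + 0 • a))).1]

lemma bddBelow_translateAverageBounds (hf : ∀ y, |f y| ≤ C) :
    BddBelow (translateAverageBounds f) :=
  ⟨-C, fun _ => le_of_mem_translateAverageBounds fun y => (abs_le.1 (hf y)).1⟩

lemma nonempty_translateAverageBounds (hf : ∀ y, |f y| ≤ C) :
    (translateAverageBounds f).Nonempty :=
  ⟨C, mem_translateAverageBounds_of_forall_le fun y => (abs_le.1 (hf y)).2⟩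

lemma upperMean_le_of_forall_le (hB : ∀ y, B ≤ f y) (hD : ∀ y, f y ≤ D) : upperMean f ≤ D :=
  csInf_le ⟨B, fun _ => le_of_mem_translateAverageBounds hB⟩
    (mem_translateAverageBounds_of_forall_le hD)

lemma upperMean_add_le (hf : ∀ y, |f y| ≤ C) (hg : ∀ y, |g y| ≤ D) :
    upperMean (f + g) ≤ upperMean f + upperMean g := by
  have hfg : ∀ y, |(f + g) y| ≤ C + D := fun y => (abs_add_le _ _).trans (add_le_add (hf y) (hg y))
  unfold upperMean
  rw [← csInf_add (nonempty_translateAverageBounds hf)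
    (bddBelow_translateAverageBounds hf) (nonempty_translateAverageBounds hg)
    (bddBelow_translateAverageBounds hg)]
  exact csInf_le_csInf (bddBelow_translateAverageBounds hfg)
    ((nonempty_translateAverageBounds hf).add (nonempty_translateAverageBounds hg))
    (Set.add_subset_iff.2 fun _ hM _ hN => add_mem_translateAverageBounds hM hN)

lemma upperMean_smul {t : ℝ} (ht : 0 < t) (f : G → ℝ) : upperMean (t • f) = t * upperMean f := by
  rw [upperMean, translateAverageBounds_smul ht, Real.sInf_smul_of_nonneg ht.le]
  rfl

lemma upperMean_zero : upperMean (0 : G → ℝ) = 0 := by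
  have h := upperMean_smul two_pos (0 : G → ℝ)
  rw [smul_zero] at h
  linarith

lemma upperMean_sub_comp_add_nonpos (hf : ∀ y, |f y| ≤ C) (a : G) :
    upperMean (fun y => f (y + a) - f y) ≤ 0 := by
  have hB : ∀ y, -(C + C) ≤ f (y + a) - f y := fun y => by
    linarith [(abs_le.1 (hf (y + a))).1, (abs_le.1 (hf y)).2]
  refine ge_of_tendsto' ((tendsto_const_div_atTop_nhds_zero_nat (2 * C)).comp
    (tendsto_add_atTop_nat 1)) fun n => ?_
  exact csInf_le ⟨_, fun _ => le_of_mem_translateAverageBounds hB⟩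
    (div_mem_translateAverageBounds_sub_comp_add hf a n)

end UpperMean

section InvariantMean

variable {G : Type*} [AddCommGroup G]

variable (G) in
def boundedFunctions : Submodule ℝ (G → ℝ) where
  carrier := {f | ∃ C, ∀ y, |f y| ≤ C}
  add_mem' := fun ⟨C, hf⟩ ⟨D, hg⟩ =>
    ⟨C + D, fun y => (abs_add_le _ _).trans (add_le_add (hf y) (hg y))⟩
  zero_mem' := ⟨0, by simp⟩
  smul_mem' t _ := fun ⟨C, hf⟩ => ⟨|t| * C, fun y => by
    simpa only [Pi.smul_apply, smul_eq_mul, abs_mul] using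
      mul_le_mul_of_nonneg_left (hf y) (abs_nonneg t)⟩

/-- Only the values of a mean on bounded functions matter; extending it linearly to all of
`G → ℝ` spares boundedness side conditions in its linearity. -/
structure IsInvariantMean (m : (G → ℝ) →ₗ[ℝ] ℝ) : Prop where
  abs_le : ∀ (f : G → ℝ) (C : ℝ), (∀ y, |f y| ≤ C) → |m f| ≤ C
  map_one : m 1 = 1
  map_comp_add : ∀ (f : G → ℝ) (C : ℝ), (∀ y, |f y| ≤ C) → ∀ a, m (fun y => f (y + a)) = m f

lemma isInvariantMean_of_le_upperMean {m : (G → ℝ) →ₗ[ℝ] ℝ}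
    (hm : ∀ (f : G → ℝ) (C : ℝ), (∀ y, |f y| ≤ C) → m f ≤ upperMean f) : IsInvariantMean m := by
  have hneg {f : G → ℝ} {C : ℝ} (hf : ∀ y, |f y| ≤ C) : ∀ y, |(-f) y| ≤ C := by simpa using hf
  have hle {f : G → ℝ} {C D : ℝ} (hf : ∀ y, |f y| ≤ C) (hD : ∀ y, f y ≤ D) : m f ≤ D :=
    (hm f C hf).trans (upperMean_le_of_forall_le (fun y => (abs_le.1 (hf y)).1) hD)
  refine ⟨fun f C hf => ?_, ?_, fun f C hf a => ?_⟩
  · have h₁ := hle hf fun y => (abs_le.1 (hf y)).2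
    have h₂ := hle (hneg hf) fun y => (abs_le.1 (hneg hf y)).2
    rw [map_neg] at h₂
    exact abs_le.2 ⟨by linarith, h₁⟩
  · have h₁ := hle (f := 1) (C := 1) (D := 1) (fun _ => by simp) fun _ => le_rfl
    have h₂ := hle (f := -1) (C := 1) (D := -1) (fun _ => by simp) fun _ => le_rfl
    rw [map_neg] at h₂
    linarith
  · have hsub {f : G → ℝ} (hf : ∀ y, |f y| ≤ C) : ∀ y, |f (y + a) - f y| ≤ C + C := fun y =>
      (abs_sub _ _).trans (add_le_add (hf _) (hf _))
    have h₁ := (hm _ _ (hsub hf)).trans (upperMean_sub_comp_add_nonpos hf a)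
    have h₂ := (hm _ _ (hsub (hneg hf))).trans (upperMean_sub_comp_add_nonpos (hneg hf) a)
    change m ((fun y => f (y + a)) - f) ≤ 0 at h₁
    change m (-(fun y => f (y + a)) - -f) ≤ 0 at h₂
    rw [map_sub] at h₁
    rw [map_sub, map_neg, map_neg] at h₂
    linarith

theorem exists_isInvariantMean (G : Type*) [AddCommGroup G] :
    ∃ m : (G → ℝ) →ₗ[ℝ] ℝ, IsInvariantMean m := by
  obtain ⟨g, -, hg⟩ := exists_extension_of_le_sublinear (⊥ : boundedFunctions G →ₗ.[ℝ] ℝ)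
    (fun f => upperMean (f : G → ℝ))
    (fun t ht f => by rw [Submodule.coe_smul]; exact upperMean_smul ht _)
    (fun ⟨_, _, hf⟩ ⟨_, _, hg⟩ => by rw [Submodule.coe_add]; exact upperMean_add_le hf hg)
    fun ⟨x, hx⟩ => by
      obtain rfl := (Submodule.mem_bot ℝ).1 hx
      exact upperMean_zero.ge
  obtain ⟨m, rfl⟩ := LinearMap.exists_extend g
  exact ⟨m, isInvariantMean_of_le_upperMean fun f C hf => hg ⟨f, C, hf⟩⟩

lemma IsInvariantMean.map_const {m : (G → ℝ) →ₗ[ℝ] ℝ} (hm : IsInvariantMean m) (t : ℝ) :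
    m (fun _ => t) = t := by
  have h : (fun _ => t) = t • (1 : G → ℝ) := by ext; simp
  rw [h, map_smul, hm.map_one, smul_eq_mul, mul_one]

end InvariantMean

section MeanIncrement

variable {G : Type*} [AddCommGroup G] {m : (G → ℝ) →ₗ[ℝ] ℝ} {u : G → ℝ}

def meanIncrement (m : (G → ℝ) →ₗ[ℝ] ℝ) (u : G → ℝ) (x : G) : ℝ :=
  m fun y => u (x + y) - u y

lemma IsInvariantMean.meanIncrement_add (hm : IsInvariantMean m)
    (hu : ∀ x, ∃ C, ∀ y, |u (x + y) - u y| ≤ C) (x₁ x₂ : G) :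
    meanIncrement m u (x₁ + x₂) = meanIncrement m u x₁ + meanIncrement m u x₂ := by
  obtain ⟨C, hC⟩ := hu x₁
  have hsplit : (fun y => u (x₁ + x₂ + y) - u y) =
      (fun y => u (x₁ + (y + x₂)) - u (y + x₂)) + fun y => u (x₂ + y) - u y := by
    ext y
    simp only [Pi.add_apply, add_comm y, add_assoc]
    ring
  rw [meanIncrement, hsplit, map_add, hm.map_comp_add (fun y => u (x₁ + y) - u y) C hC x₂]
  rfl

lemma IsInvariantMean.meanIncrement_eq (hm : IsInvariantMean m) {x : G} {t : ℝ}
    (h : ∀ y, u (x + y) = u y + t) : meanIncrement m u x = t := by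
  simp only [meanIncrement, h, add_sub_cancel_left, hm.map_const]

end MeanIncrement

section Lindenstrauss

variable {X : Type*} [NormedAddCommGroup X] [NormedSpace ℝ X] {Z : Submodule ℝ X}
  {mZ : (Z → ℝ) →ₗ[ℝ] ℝ} {mX : (X → ℝ) →ₗ[ℝ] ℝ} {c : ℝ≥0} {r : X → Z}

variable (mZ r) in
noncomputable def averagedRetraction (x : X) : StrongDual ℝ Z →ₗ[ℝ] ℝ :=
  mZ ∘ₗ LinearMap.pi fun y : Z => (inclusionInDoubleDual ℝ Z (r (x + y) - y)).toLinearMap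

variable (mZ mX r) in
noncomputable def linearizedRetraction (x : X) : StrongDual ℝ Z →ₗ[ℝ] ℝ :=
  mX ∘ₗ LinearMap.pi fun y : X => averagedRetraction mZ r (x + y) - averagedRetraction mZ r y

lemma averagedRetraction_apply (x : X) (φ : StrongDual ℝ Z) :
    averagedRetraction mZ r x φ = mZ fun y => φ (r (x + y) - y) :=
  rfl

lemma linearizedRetraction_apply (x : X) (φ : StrongDual ℝ Z) :
    linearizedRetraction mZ mX r x φ = meanIncrement mX (averagedRetraction mZ r · φ) x :=
  rfl

lemma norm_retraction_add_sub_le (hr : LipschitzWith c r) (hr_fix : ∀ z : Z, r z = z)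
    (x : X) (y : Z) : ‖r (x + y) - y‖ ≤ c * ‖x‖ := by
  simpa [hr_fix] using hr.norm_sub_le (x + y) y

lemma abs_averagedRetraction_sub_le (hmZ : IsInvariantMean mZ) (hr : LipschitzWith c r)
    (x x' : X) (φ : StrongDual ℝ Z) :
    |averagedRetraction mZ r x φ - averagedRetraction mZ r x' φ| ≤ ‖φ‖ * (c * ‖x - x'‖) := by
  rw [averagedRetraction_apply, averagedRetraction_apply, ← map_sub]
  refine hmZ.abs_le _ _ fun y => ?_
  rw [Pi.sub_apply, ← map_sub, sub_sub_sub_cancel_right, ← Real.norm_eq_abs]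
  exact φ.le_opNorm_of_le (by simpa using hr.norm_sub_le (x + y) (x' + y))

lemma averagedRetraction_add_coe (hmZ : IsInvariantMean mZ) (hr : LipschitzWith c r)
    (hr_fix : ∀ z : Z, r z = z) (x : X) (z : Z) (φ : StrongDual ℝ Z) :
    averagedRetraction mZ r (x + z) φ = averagedRetraction mZ r x φ + φ z := by
  have hshift : (fun y : Z => φ (r (x + z + y) - y)) =
      (fun y => φ (r (x + ↑(y + z)) - (y + z))) + fun _ => φ z := by
    ext y
    simp only [Pi.add_apply, Submodule.coe_add, map_sub, map_add]
    rw [add_assoc x, add_comm (z : X)]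
    ring
  have hbound : ∀ y : Z, |φ (r (x + y) - y)| ≤ ‖φ‖ * (c * ‖x‖) := fun y => by
    rw [← Real.norm_eq_abs]
    exact φ.le_opNorm_of_le (norm_retraction_add_sub_le hr hr_fix x y)
  rw [averagedRetraction_apply, hshift, map_add,
    hmZ.map_comp_add (fun y => φ (r (x + y) - y)) _ hbound z, hmZ.map_const]
  rfl

lemma linearizedRetraction_add (hmZ : IsInvariantMean mZ) (hmX : IsInvariantMean mX)
    (hr : LipschitzWith c r) (x₁ x₂ : X) :
    linearizedRetraction mZ mX r (x₁ + x₂) =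
      linearizedRetraction mZ mX r x₁ + linearizedRetraction mZ mX r x₂ := by
  ext φ
  simp only [LinearMap.add_apply, linearizedRetraction_apply]
  refine hmX.meanIncrement_add (fun x => ⟨‖φ‖ * (c * ‖x‖), fun y => ?_⟩) x₁ x₂
  simpa using abs_averagedRetraction_sub_le hmZ hr (x + y) y φ

lemma abs_linearizedRetraction_le (hmZ : IsInvariantMean mZ) (hmX : IsInvariantMean mX)
    (hr : LipschitzWith c r) (x : X) (φ : StrongDual ℝ Z) :
    |linearizedRetraction mZ mX r x φ| ≤ c * ‖x‖ * ‖φ‖ := by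
  refine (hmX.abs_le _ _ fun y => ?_).trans_eq (mul_comm _ _)
  simpa using abs_averagedRetraction_sub_le hmZ hr (x + y) y φ

lemma linearizedRetraction_coe (hmZ : IsInvariantMean mZ) (hmX : IsInvariantMean mX)
    (hr : LipschitzWith c r) (hr_fix : ∀ z : Z, r z = z) (z : Z) (φ : StrongDual ℝ Z) :
    linearizedRetraction mZ mX r z φ = φ z := by
  rw [linearizedRetraction_apply]
  exact hmX.meanIncrement_eq fun y => by
    rw [add_comm]
    exact averagedRetraction_add_coe hmZ hr hr_fix y z φ

end Lindenstrauss

lemma exists_continuousLinearMap_of_add_of_abs_le {E F : Type*} [NormedAddCommGroup E]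
    [NormedSpace ℝ E] [NormedAddCommGroup F] [NormedSpace ℝ F] (B : E → F →ₗ[ℝ] ℝ)
    (hB : ∀ x y, B (x + y) = B x + B y) (C : ℝ≥0) (hC : ∀ x φ, |B x φ| ≤ C * ‖x‖ * ‖φ‖) :
    ∃ T : E →L[ℝ] StrongDual ℝ F, ∀ x φ, T x φ = B x φ := by
  have hnorm (x : E) (φ : F) : ‖B x φ‖ ≤ C * ‖x‖ * ‖φ‖ := (Real.norm_eq_abs _).trans_le (hC x φ)
  let T : E →+ StrongDual ℝ F :=
    AddMonoidHom.mk' (fun x => (B x).mkContinuous (C * ‖x‖) (hnorm x)) fun x y => by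
      ext φ; simp [hB]
  refine ⟨T.toRealLinearMap (AddMonoidHomClass.continuous_of_bound T C fun x => ?_),
    fun _ _ => rfl⟩
  exact LinearMap.mkContinuous_norm_le _ (by positivity) (hnorm x)

theorem exists_extend_inclusionInDoubleDual_of_lipschitz_retraction {X : Type*}
    [NormedAddCommGroup X] [NormedSpace ℝ X] {Z : Submodule ℝ X} {c : ℝ≥0} {r : X → Z}
    (hr : LipschitzWith c r) (hr_fix : ∀ z : Z, r z = z) :
    ∃ T : X →L[ℝ] StrongDual ℝ (StrongDual ℝ Z), ∀ z : Z, T z = inclusionInDoubleDual ℝ Z z := by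
  obtain ⟨mZ, hmZ⟩ := exists_isInvariantMean Z
  obtain ⟨mX, hmX⟩ := exists_isInvariantMean X
  obtain ⟨T, hT⟩ := exists_continuousLinearMap_of_add_of_abs_le (F := StrongDual ℝ Z)
    (linearizedRetraction mZ mX r) (linearizedRetraction_add hmZ hmX hr) c
    (abs_linearizedRetraction_le hmZ hmX hr)
  exact ⟨T, fun z => ContinuousLinearMap.ext fun φ => by
    rw [hT, linearizedRetraction_coe hmZ hmX hr hr_fix, dual_def]⟩

theorem lipschitz_retract_and_bidual_complemented_implies_complemented_general
    (X : Type u) [NormedAddCommGroup X] [NormedSpace ℝ X]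
    (Z : Submodule ℝ X) (c : ℝ≥0)
    (hretract : ∃ r : X → X, LipschitzWith c r ∧ (∀ x : X, r x ∈ Z) ∧
      ∀ z : X, z ∈ Z → r z = z)
    (hbidual : ∃ P : StrongDual ℝ (StrongDual ℝ Z) →L[ℝ] Z,
      ∀ z : Z, P (inclusionInDoubleDual ℝ Z z) = z) :
    ∃ Q : X →L[ℝ] X, Q.comp Q = Q ∧ LinearMap.range (Q : X →ₗ[ℝ] X) = Z := by
  obtain ⟨r, hr, hrZ, hr_fix⟩ := hretract
  obtain ⟨P, hP⟩ := hbidual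
  obtain ⟨T, hT⟩ := exists_extend_inclusionInDoubleDual_of_lipschitz_retraction
    (hr.subtype_mk hrZ) fun z => Subtype.ext (hr_fix z z.2)
  have hcompl : Z.ClosedComplemented := ⟨P ∘L T, fun z => by simp [hT, hP]⟩
  obtain ⟨q, hq⟩ := hcompl.exists_isTopCompl
  exact ⟨Z.projectionL q hq, (Submodule.isIdempotentElem_projectionL hq).eq,
    Submodule.range_projectionL hq⟩

/-- Corollary 3.B.7: if a closed subspace `Z` of a real Banach space `X` is a
`c`-Lipschitz retract of `X` and is complemented in its bidual, then `Z` is complemented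
in `X` by a continuous linear projection. -/
theorem lipschitz_retract_and_bidual_complemented_implies_complemented
    (X : Type u) [NormedAddCommGroup X] [NormedSpace ℝ X] [CompleteSpace X]
    (Z : Submodule ℝ X) (hZ : IsClosed (Z : Set X)) (c : ℝ≥0)
    (hretract : ∃ r : X → X, LipschitzWith c r ∧ (∀ x : X, r x ∈ Z) ∧
      ∀ z : X, z ∈ Z → r z = z)
    (hbidual : ∃ P : StrongDual ℝ (StrongDual ℝ Z) →L[ℝ] Z,
      ∀ z : Z, P (inclusionInDoubleDual ℝ Z z) = z) :
    ∃ Q : X →L[ℝ] X, Q.comp Q = Q ∧ LinearMap.range (Q : X →ₗ[ℝ] X) = Z :=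
  lipschitz_retract_and_bidual_complemented_implies_complemented_general X Z c hretract hbidual
end
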